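/- Let H be an orderable k-hypergraph on V, k ≥ 2, with |V| = n = km a multiple of k, with elimination order v_1,...,v_n in which each vertex is designated dominating or isolating and all v_j with j < k are designated dominating, and suppose the number of designated isolating vertices is l ≤ k-1. Then H has a perfect matching; indeed, the l isolating vertices together with k-l dominating vertices including v_n form an edge of H, and this edge together with an arbitrary partition of the remaining (m-1)k vertices into k-sets (all of which are edges of H) is a perfect matching. -/
import Mathlib


variable {V : Type*} [DecidableEq V]

/-- Position `i` of the ordering `l` is *dominating* for the `k`-hypergraph `H`:
every `k`-set `E` with `l.get i ∈ E` contained in the first `i+1` vertices of `l`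
is an edge of `H`. -/
def DomAt (k : ℕ) (H : Finset (Finset V)) (l : List V) (i : Fin l.length) : Prop :=
  ∀ E : Finset V, E.card = k → l.get i ∈ E →
    (∀ x ∈ E, x ∈ l.take ((i : ℕ) + 1)) → E ∈ H

/-- Position `i` of the ordering `l` is *isolating* for the `k`-hypergraph `H`:
every `k`-set `E` with `l.get i ∈ E` contained in the first `i+1` vertices of `l`
is a non-edge of `H`. -/
def IsoAt (k : ℕ) (H : Finset (Finset V)) (l : List V) (i : Fin l.length) : Prop :=
  ∀ E : Finset V, E.card = k → l.get i ∈ E →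
    (∀ x ∈ E, x ∈ l.take ((i : ℕ) + 1)) → E ∉ H

/-- `l` is an elimination order for `H`: each position is dominating or isolating. -/
def IsElimOrder (k : ℕ) (H : Finset (Finset V)) (l : List V) : Prop :=
  ∀ i : Fin l.length, DomAt k H l i ∨ IsoAt k H l i

/-- `H` is orderable on vertex set `W`: some enumeration of `W` is an elimination order. -/
def Orderable (k : ℕ) (H : Finset (Finset V)) (W : Finset V) : Prop :=
  ∃ l : List V, l.Nodup ∧ l.toFinset = W ∧ IsElimOrder k H l

/-- `H` is separable on vertex set `W`: for some labeling `a : V → ℤ`,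
`H = {E ⊆ W : |E| = k, a(E) ≥ 0}`. -/
def Separable (k : ℕ) (H : Finset (Finset V)) (W : Finset V) : Prop :=
  ∃ a : V → ℤ, ∀ E : Finset V, E ∈ H ↔ (E ⊆ W ∧ E.card = k ∧ 0 ≤ ∑ v ∈ E, a v)

/-- `M` is a perfect matching of the vertex set `W`: its edges are pairwise
disjoint and their union is `W`. -/
def IsPerfectMatching (M : Finset (Finset V)) (W : Finset V) : Prop :=
  (M : Set (Finset V)).PairwiseDisjoint id ∧ M.biUnion id = W


lemma mem_take_of_indexOf_lt {V : Type*} [DecidableEq V] {l : List V} {x : V} (hx : x ∈ l)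
    {j : ℕ} (h : l.idxOf x < j) : x ∈ l.take j := by
  have h1 : l.idxOf x < l.length := List.idxOf_lt_length_iff.mpr hx
  have h2 : l.idxOf x < (l.take j).length := by simp [List.length_take]; omega
  have := List.getElem_mem h2
  rwa [List.getElem_take, List.getElem_idxOf h1] at this

lemma partition_into_ksets {V : Type*} [DecidableEq V] (k : ℕ) (hk : 0 < k) :
    ∀ t (R : Finset V), R.card = k * t →
    ∃ P : Finset (Finset V), (∀ A ∈ P, A ⊆ R ∧ A.card = k) ∧
      (P : Set (Finset V)).PairwiseDisjoint id ∧ P.biUnion id = R := by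
  intro t
  induction t with
  | zero =>
    intro R hR
    have : R = ∅ := Finset.card_eq_zero.mp (by simpa using hR)
    exact ⟨∅, by simp, by simp, by simp [this]⟩
  | succ t ih =>
    intro R hR
    obtain ⟨S, hSR, hScard⟩ := Finset.exists_subset_card_eq
      (show k ≤ R.card by rw [hR]; nlinarith)
    obtain ⟨P, hP1, hP2, hP3⟩ := ih (R \ S)
      (by rw [Finset.card_sdiff_of_subset hSR, hR, hScard]; ring_nf; omega)
    have hdisj : ∀ A ∈ P, Disjoint S A := fun A hA =>
      (Finset.disjoint_of_subset_left (hP1 A hA).1 Finset.sdiff_disjoint).symm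
    refine ⟨insert S P, ?_, ?_, ?_⟩
    · intro A hA
      rcases Finset.mem_insert.mp hA with rfl | hA
      · exact ⟨hSR, hScard⟩
      · exact ⟨(hP1 A hA).1.trans (Finset.sdiff_subset), (hP1 A hA).2⟩
    · rw [Finset.coe_insert]
      refine hP2.insert ?_
      intro A hA _
      exact hdisj A hA
    · rw [Finset.biUnion_insert, hP3]
      simp only [id]
      exact Finset.union_sdiff_of_subset hSR

/-- Let `H` be an orderable `k`-hypergraph, `k ≥ 2`, on `n = k·m`
vertices (`m ≥ 1`), with an elimination order in which each vertex is designated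
dominating (member of `D`) or isolating, the first `k-1` vertices and the last
vertex being designated dominating. If the number `l` of designated isolating
vertices is at most `k - 1`, then `H` has a perfect matching; indeed one containing
an edge consisting of the isolating vertices together with `k - l` dominating
vertices including the last vertex. -/
theorem perfect_matching_of_few_isolating (k m : ℕ) (hk : 2 ≤ k) (hm : 0 < m)
    (H : Finset (Finset V)) (l : List V) (D : Finset V)
    (hl : l.Nodup) (hlen : l.length = k * m)
    (hH : ∀ E ∈ H, E ⊆ l.toFinset ∧ E.card = k)
    (hdes : ∀ i : Fin l.length,
      (l.get i ∈ D → DomAt k H l i) ∧ (l.get i ∉ D → IsoAt k H l i))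
    (hfirst : ∀ i : Fin l.length, (i : ℕ) + 1 < k → l.get i ∈ D)
    (hlast : ∀ h : l ≠ [], l.getLast h ∈ D)
    (hiso : (l.filter fun x => x ∉ D).length ≤ k - 1) :
    ∃ M : Finset (Finset V), M ⊆ H ∧ IsPerfectMatching M l.toFinset ∧
      ∃ E ∈ M, (∀ x ∈ l, x ∉ D → x ∈ E) ∧ ∀ h : l ≠ [], l.getLast h ∈ E := by
  have hlpos : 0 < l.length := by rw [hlen]; positivity
  have hne : l ≠ [] := List.length_pos_iff.mp hlpos
  set vlast := l.getLast hne with hvlast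
  -- every k-set of dominating vertices is an edge
  have edgeA : ∀ E : Finset V, E ⊆ l.toFinset → E.card = k → (∀ x ∈ E, x ∈ D) → E ∈ H := by
    intro E hEsub hEcard hED
    have hEne : E.Nonempty := Finset.card_pos.mp (by omega)
    obtain ⟨x, hxE, hxmax⟩ := E.exists_max_image (fun x => l.idxOf x) hEne
    have hxl : x ∈ l := List.mem_toFinset.mp (hEsub hxE)
    have hilt : l.idxOf x < l.length := List.idxOf_lt_length_iff.mpr hxl
    have hget : l.get ⟨l.idxOf x, hilt⟩ = x := List.getElem_idxOf hilt
    have hdom : DomAt k H l ⟨l.idxOf x, hilt⟩ :=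
      (hdes ⟨l.idxOf x, hilt⟩).1 (by rw [hget]; exact hED x hxE)
    apply hdom E hEcard (by rw [hget]; exact hxE)
    intro y hyE
    have hyl : y ∈ l := List.mem_toFinset.mp (hEsub hyE)
    apply mem_take_of_indexOf_lt hyl
    exact Nat.lt_succ_of_le (hxmax y hyE)
  -- every k-set containing the last vertex is an edge
  have edgeB : ∀ E : Finset V, E ⊆ l.toFinset → E.card = k → vlast ∈ E → E ∈ H := by
    intro E hEsub hEcard hvE
    have h1 : l.length - 1 < l.length := by omega
    have hget : l.get ⟨l.length - 1, h1⟩ = vlast := by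
      simp [hvlast, List.getLast_eq_getElem]
    have hdom : DomAt k H l ⟨l.length - 1, h1⟩ :=
      (hdes ⟨l.length - 1, h1⟩).1 (by rw [hget]; exact hlast hne)
    apply hdom E hEcard (by rw [hget]; exact hvE)
    intro y hyE
    have : l.length - 1 + 1 = l.length := by omega
    rw [this, List.take_length]
    exact List.mem_toFinset.mp (hEsub hyE)
  -- the isolating vertices
  set I : Finset V := l.toFinset.filter (fun x => x ∉ D) with hI
  have hIcard : I.card ≤ k - 1 := by
    have h1 : I = (l.filter (fun x => x ∉ D)).toFinset := by
      ext x; simp [hI, List.mem_filter]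
    rw [h1, List.toFinset_card_of_nodup (hl.filter _)]
    exact hiso
  have hvD : vlast ∈ D := hlast hne
  have hvmem : vlast ∈ l.toFinset := List.mem_toFinset.mpr (List.getLast_mem hne)
  have hvI : vlast ∉ I := by simp [hI, hvD]
  have hcardT : l.toFinset.card = k * m := by
    rw [List.toFinset_card_of_nodup hl, hlen]
  -- choose filler vertices
  set Rest := l.toFinset \ insert vlast I with hRest
  have hIsub : I ⊆ l.toFinset := Finset.filter_subset _ _
  have hinssub : insert vlast I ⊆ l.toFinset := Finset.insert_subset hvmem hIsub
  have hRestcard : Rest.card = k * m - (I.card + 1) := by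
    rw [hRest, Finset.card_sdiff_of_subset hinssub, Finset.card_insert_of_notMem hvI, hcardT]
  obtain ⟨S, hSRest, hScard⟩ := Finset.exists_subset_card_eq
    (show k - I.card - 1 ≤ Rest.card by
      rw [hRestcard]
      have h2 : k ≤ k * m := Nat.le_mul_of_pos_right k hm
      omega)
  -- the special edge
  set E₀ := insert vlast (I ∪ S) with hE₀
  have hSI : Disjoint I S := by
    apply Finset.disjoint_of_subset_right hSRest
    apply Finset.disjoint_of_subset_right (Finset.sdiff_subset_sdiff (le_refl _) (Finset.subset_insert _ _))
    exact Finset.disjoint_sdiff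
  have hvIS : vlast ∉ I ∪ S := by
    intro h
    rcases Finset.mem_union.mp h with h | h
    · exact hvI h
    · exact (Finset.mem_sdiff.mp (hSRest h)).2 (Finset.mem_insert_self _ _)
  have hE₀card : E₀.card = k := by
    rw [hE₀, Finset.card_insert_of_notMem hvIS, Finset.card_union_of_disjoint hSI, hScard]
    omega
  have hE₀sub : E₀ ⊆ l.toFinset := by
    rw [hE₀]
    apply Finset.insert_subset hvmem
    exact Finset.union_subset hIsub (hSRest.trans Finset.sdiff_subset)
  have hE₀H : E₀ ∈ H := edgeB E₀ hE₀sub hE₀card (Finset.mem_insert_self _ _)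
  -- the rest, all dominating
  set Rem := l.toFinset \ E₀ with hRem
  have hRemcard : Rem.card = k * (m - 1) := by
    rw [hRem, Finset.card_sdiff_of_subset hE₀sub, hcardT, hE₀card]
    obtain ⟨t, rfl⟩ : ∃ t, m = t + 1 := ⟨m - 1, by omega⟩
    rw [Nat.add_sub_cancel, Nat.mul_succ, Nat.add_sub_cancel]
  have hRemD : ∀ x ∈ Rem, x ∈ D := by
    intro x hx
    obtain ⟨hxT, hxE₀⟩ := Finset.mem_sdiff.mp hx
    by_contra hxD
    exact hxE₀ (Finset.mem_insert_of_mem (Finset.mem_union_left _ (Finset.mem_filter.mpr ⟨hxT, hxD⟩)))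
  obtain ⟨P, hP1, hP2, hP3⟩ := partition_into_ksets k (by omega) (m - 1) Rem hRemcard
  -- the matching
  refine ⟨insert E₀ P, ?_, ⟨?_, ?_⟩, E₀, Finset.mem_insert_self _ _, ?_, ?_⟩
  · intro A hA
    rcases Finset.mem_insert.mp hA with rfl | hA
    · exact hE₀H
    · exact edgeA A ((hP1 A hA).1.trans (Finset.sdiff_subset)) (hP1 A hA).2
        (fun x hx => hRemD x ((hP1 A hA).1 hx))
  · rw [Finset.coe_insert]
    refine hP2.insert ?_
    intro A hA _
    exact (Finset.disjoint_of_subset_left (hP1 A hA).1 Finset.sdiff_disjoint).symm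
  · rw [Finset.biUnion_insert, hP3]
    simp only [id]
    exact Finset.union_sdiff_of_subset hE₀sub
  · intro x hxl hxD
    exact Finset.mem_insert_of_mem (Finset.mem_union_left _
      (Finset.mem_filter.mpr ⟨List.mem_toFinset.mpr hxl, hxD⟩))
  · intro h
    exact Finset.mem_insert_self _ _
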